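/- arXiv:math/0511265 — 4 statements merged into one kernel-verified Lean document; each statement's English description precedes it below -/
import Mathlib

section
/- Let (ε_n)_{n≥0} be an i.i.d. sequence of standard exponential random variables and let 0 < q < 1. Then the random series I = Σ_{n=0}^∞ q^n ε_n converges almost surely, and for every real λ < 1 its exponential moment satisfies E[exp(λ I)] = ∏_{j=0}^∞ (1 - λ q^j)^{-1}. -/
/-!
Exponential variables are nonnegative with finite mean, so `∑ qⁿ εₙ` has finite expectation and
converges almost surely. The exponential law has `E[exp (t ε)] = (1 - t)⁻¹` for `t < 1`, so by
independence the partial sums satisfy `E[exp (λ ∑_{n<N} qⁿ εₙ)] = ∏_{n<N} (1 - λ qⁿ)⁻¹`. Letting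
`N → ∞` is monotone convergence when `λ ≥ 0` and dominated convergence (the integrands are bounded
by `1`) when `λ < 0`; the partial products converge because `∑ log (1 - λ qⁿ)` does.
-/

open MeasureTheory ProbabilityTheory Real Filter Topology

lemma mul_pow_lt_one {l q : ℝ} (hl : l < 1) (hq0 : 0 ≤ q) (hq1 : q ≤ 1) (n : ℕ) :
    l * q ^ n < 1 := by
  rcases le_or_gt l 0 with h | h
  · nlinarith [pow_nonneg hq0 n]
  · nlinarith [pow_le_one₀ hq0 hq1 (n := n)]

lemma multipliable_inv_one_sub_mul_pow {l q : ℝ} (hl : l < 1) (hq0 : 0 ≤ q) (hq1 : q < 1) :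
    Multipliable fun j : ℕ => (1 - l * q ^ j)⁻¹ := by
  have hlog := Real.summable_log_one_add_of_summable
    ((summable_geometric_of_lt_one hq0 hq1).mul_left (-l))
  refine Real.multipliable_of_summable_log
    (fun j => inv_pos.2 (sub_pos.2 (mul_pow_lt_one hl hq0 hq1.le j))) ?_
  simpa only [Real.log_inv, neg_mul, ← sub_eq_add_neg] using hlog.neg

namespace ProbabilityTheory

section ExpMeasure

variable {r t : ℝ}

lemma ae_nonneg_expMeasure (r : ℝ) : ∀ᵐ x ∂expMeasure r, 0 ≤ x := by
  have h : expMeasure r (Set.Iio 0) = 0 := by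
    rw [expMeasure, gammaMeasure, withDensity_apply _ measurableSet_Iio]
    exact lintegral_gammaPDF_of_nonpos le_rfl
  rw [ae_iff]
  simp only [not_le]
  exact h

lemma exponentialPDF_mul_exp_mul (hr : 0 < r) (ht : t < r) (x : ℝ) :
    exponentialPDF r x * ENNReal.ofReal (exp (t * x))
      = ENNReal.ofReal (r / (r - t)) * exponentialPDF (r - t) x := by
  have hrt : 0 < r - t := sub_pos.2 ht
  rcases lt_or_ge x 0 with hx | hx
  · simp [exponentialPDF_of_neg hx]
  · rw [exponentialPDF_of_nonneg hx, exponentialPDF_of_nonneg hx,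
      ← ENNReal.ofReal_mul (by positivity), ← ENNReal.ofReal_mul (by positivity)]
    congr 1
    field_simp
    rw [← exp_add]
    ring_nf

lemma lintegral_exp_mul_expMeasure (hr : 0 < r) (ht : t < r) :
    ∫⁻ x, ENNReal.ofReal (exp (t * x)) ∂expMeasure r = ENNReal.ofReal (r / (r - t)) := by
  rw [expMeasure, gammaMeasure, lintegral_withDensity_eq_lintegral_mul _
    (show Measurable (gammaPDF 1 r) from (measurable_gammaPDFReal 1 r).ennreal_ofReal)
    (by fun_prop)]
  change ∫⁻ x, exponentialPDF r x * ENNReal.ofReal (exp (t * x)) = _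
  simp_rw [exponentialPDF_mul_exp_mul hr ht]
  have hpdf : Measurable (exponentialPDF (r - t)) :=
    (measurable_exponentialPDFReal _).ennreal_ofReal
  rw [lintegral_const_mul _ hpdf, lintegral_exponentialPDF_eq_one (sub_pos.2 ht), mul_one]

lemma mgf_id_expMeasure (hr : 0 < r) (ht : t < r) :
    mgf id (expMeasure r) t = r / (r - t) := by
  change ∫ x, exp (t * x) ∂expMeasure r = _
  rw [integral_eq_lintegral_of_nonneg_ae (ae_of_all _ fun x => (exp_pos _).le)
    (by fun_prop), lintegral_exp_mul_expMeasure hr ht,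
    ENNReal.toReal_ofReal (div_nonneg hr.le (sub_pos.2 ht).le)]

lemma integrable_id_expMeasure (hr : 0 < r) : Integrable id (expMeasure r) := by
  have := isProbabilityMeasure_expMeasure hr
  refine integrable_of_mem_interior_integrableExpSet (mem_interior_iff_mem_nhds.2 ?_)
  refine mem_of_superset (Iio_mem_nhds hr) fun t ht => mgf_pos_iff.1 ?_
  rw [mgf_id_expMeasure hr ht]
  exact div_pos hr (sub_pos.2 ht)

variable {Ω : Type*} [MeasurableSpace Ω] {μ : Measure Ω} {Y : Ω → ℝ}

lemma HasLaw.ae_nonneg_of_expMeasure (hY : HasLaw Y (expMeasure r) μ) : ∀ᵐ ω ∂μ, 0 ≤ Y ω :=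
  (hY.ae_iff (measurableSet_Ici (a := (0 : ℝ))).mem).2 (ae_nonneg_expMeasure r)

lemma HasLaw.integrable_of_expMeasure (hY : HasLaw Y (expMeasure r) μ) (hr : 0 < r) :
    Integrable Y μ := by
  have h := integrable_id_expMeasure hr
  rwa [← hY.map_eq, integrable_map_measure aestronglyMeasurable_id hY.aemeasurable] at h

lemma HasLaw.mgf_of_expMeasure (hY : HasLaw Y (expMeasure r) μ) (hr : 0 < r) (ht : t < r) :
    mgf Y μ t = r / (r - t) := by
  rw [← mgf_id_map hY.aemeasurable, hY.map_eq, mgf_id_expMeasure hr ht]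

end ExpMeasure

section Series

variable {Ω : Type*} [MeasurableSpace Ω] {μ : Measure Ω} {X : ℕ → Ω → ℝ}

lemma ae_summable_of_summable_integral (hint : ∀ n, Integrable (X n) μ)
    (hnonneg : ∀ᵐ ω ∂μ, ∀ n, 0 ≤ X n ω) (hsum : Summable fun n => ∫ ω, X n ω ∂μ) :
    ∀ᵐ ω ∂μ, Summable fun n => X n ω := by
  have hmeas : ∀ n, AEMeasurable (fun ω => ENNReal.ofReal (X n ω)) μ :=
    fun n => (hint n).aemeasurable.ennreal_ofReal
  have hfin : ∫⁻ ω, ∑' n, ENNReal.ofReal (X n ω) ∂μ ≠ ⊤ := by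
    rw [lintegral_tsum hmeas]
    have hint_nonneg : ∀ n, 0 ≤ ∫ ω, X n ω ∂μ :=
      fun n => integral_nonneg_of_ae ((ae_all_iff.1 hnonneg) n)
    simp_rw [← ofReal_integral_eq_lintegral_ofReal (hint _) ((ae_all_iff.1 hnonneg) _),
      ← ENNReal.ofReal_tsum_of_nonneg hint_nonneg hsum]
    exact ENNReal.ofReal_ne_top
  filter_upwards [ae_lt_top' (AEMeasurable.tsum hmeas) hfin, hnonneg] with ω hω hω₀
  refine (ENNReal.summable_toReal hω.ne).congr fun n => ?_
  exact ENNReal.toReal_ofReal (hω₀ n)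

lemma tendsto_lintegral_exp_mul_sum_range [IsFiniteMeasure μ] (hmeas : ∀ n, Measurable (X n))
    (hnonneg : ∀ᵐ ω ∂μ, ∀ n, 0 ≤ X n ω) (hsum : ∀ᵐ ω ∂μ, Summable fun n => X n ω) (l : ℝ) :
    Tendsto (fun N => ∫⁻ ω, ENNReal.ofReal (exp (l * ∑ n ∈ Finset.range N, X n ω)) ∂μ) atTop
      (𝓝 (∫⁻ ω, ENNReal.ofReal (exp (l * ∑' n, X n ω)) ∂μ)) := by
  have hmeasN : ∀ N, Measurable fun ω => ENNReal.ofReal (exp (l * ∑ n ∈ Finset.range N, X n ω)) :=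
    fun N => ((Finset.measurable_sum _ fun n _ => hmeas n).const_mul l).exp.ennreal_ofReal
  have hlim : ∀ᵐ ω ∂μ, Tendsto (fun N => ENNReal.ofReal (exp (l * ∑ n ∈ Finset.range N, X n ω)))
      atTop (𝓝 (ENNReal.ofReal (exp (l * ∑' n, X n ω)))) := by
    filter_upwards [hsum] with ω hω
    exact (ENNReal.continuous_ofReal.comp continuous_exp).continuousAt.tendsto.comp
      (hω.hasSum.tendsto_sum_nat.const_mul l)
  have hpartial_mono : ∀ᵐ ω ∂μ, Monotone fun N => ∑ n ∈ Finset.range N, X n ω := by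
    filter_upwards [hnonneg] with ω hω
    exact fun N M hNM => Finset.sum_le_sum_of_subset_of_nonneg
      (Finset.range_subset_range.2 hNM) fun n _ _ => hω n
  rcases le_or_gt 0 l with hl | hl
  · refine lintegral_tendsto_of_tendsto_of_monotone (fun N => (hmeasN N).aemeasurable) ?_ hlim
    filter_upwards [hpartial_mono] with ω hω N M hNM
    exact ENNReal.ofReal_le_ofReal (exp_le_exp.2 (mul_le_mul_of_nonneg_left (hω hNM) hl))
  · refine tendsto_lintegral_of_dominated_convergence (fun _ => 1) hmeasN (fun N => ?_)
      (by simp) hlim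
    filter_upwards [hnonneg] with ω hω
    rw [← ENNReal.ofReal_one]
    gcongr
    rw [exp_le_one_iff]
    exact mul_nonpos_of_nonpos_of_nonneg hl.le (Finset.sum_nonneg fun n _ => hω n)

theorem iIndepFun.integral_exp_mul_tsum {l P : ℝ} (hindep : iIndepFun X μ)
    (hmeas : ∀ n, Measurable (X n)) (hnonneg : ∀ᵐ ω ∂μ, ∀ n, 0 ≤ X n ω)
    (hsum : ∀ᵐ ω ∂μ, Summable fun n => X n ω)
    (hint : ∀ n, Integrable (fun ω => exp (l * X n ω)) μ)
    (hprod : HasProd (fun n => mgf (X n) μ l) P) :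
    ∫ ω, exp (l * ∑' n, X n ω) ∂μ = P := by
  have := hindep.isProbabilityMeasure
  have hpartial : ∀ N, ∫⁻ ω, ENNReal.ofReal (exp (l * ∑ n ∈ Finset.range N, X n ω)) ∂μ
      = ENNReal.ofReal (∏ n ∈ Finset.range N, mgf (X n) μ l) := by
    intro N
    rw [← hindep.mgf_sum hmeas, ← ofReal_integral_eq_lintegral_ofReal
      (by simpa only [Finset.sum_apply] using hindep.integrable_exp_mul_sum hmeas fun n _ => hint n)
      (ae_of_all _ fun ω => (exp_pos _).le)]
    simp only [mgf, Finset.sum_apply]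
  have hlintegral : ∫⁻ ω, ENNReal.ofReal (exp (l * ∑' n, X n ω)) ∂μ = ENNReal.ofReal P := by
    refine tendsto_nhds_unique (tendsto_lintegral_exp_mul_sum_range hmeas hnonneg hsum l) ?_
    simp_rw [hpartial]
    exact (ENNReal.continuous_ofReal.tendsto P).comp hprod.tendsto_prod_nat
  have haesm : AEStronglyMeasurable (fun ω => exp (l * ∑' n, X n ω)) μ := by
    refine aestronglyMeasurable_of_tendsto_ae atTop
      (f := fun N ω => exp (l * ∑ n ∈ Finset.range N, X n ω)) (fun N => ?_) ?_
    · exact ((Finset.measurable_sum _ fun n _ => hmeas n).const_mul l).exp.aestronglyMeasurable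
    · filter_upwards [hsum] with ω hω
      exact (continuous_exp.tendsto _).comp (hω.hasSum.tendsto_sum_nat.const_mul l)
  rw [integral_eq_lintegral_of_nonneg_ae (ae_of_all _ fun ω => (exp_pos _).le) haesm, hlintegral,
    ENNReal.toReal_ofReal (hprod.nonneg fun n => mgf_nonneg)]

end Series

end ProbabilityTheory

/-- If `(ε n)` is an i.i.d. sequence of standard exponential random variables and
`0 < q < 1`, then the series `I = ∑ q^n ε_n` converges a.s., and for every `λ < 1`,
`E[exp (λ I)] = ∏_{j=0}^∞ (1 - λ q^j)⁻¹`. -/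
theorem exponential_functional_poisson_laplace
    {Ω : Type*} [MeasurableSpace Ω] (μ : Measure Ω) [IsProbabilityMeasure μ]
    (ε : ℕ → Ω → ℝ) (hmeas : ∀ n, Measurable (ε n))
    (hindep : iIndepFun ε μ)
    (hlaw : ∀ n, Measure.map (ε n) μ = expMeasure 1)
    (q : ℝ) (hq0 : 0 < q) (hq1 : q < 1) :
    (∀ᵐ ω ∂μ, Summable (fun n => q ^ n * ε n ω)) ∧
    ∀ l : ℝ, l < 1 →
      ∫ ω, Real.exp (l * ∑' n, q ^ n * ε n ω) ∂μ
        = ∏' j : ℕ, (1 - l * q ^ j)⁻¹ := by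
  have hε : ∀ n, HasLaw (ε n) (expMeasure 1) μ := fun n => ⟨(hmeas n).aemeasurable, hlaw n⟩
  have hnonneg : ∀ᵐ ω ∂μ, ∀ n, 0 ≤ q ^ n * ε n ω := ae_all_iff.2 fun n =>
    (hε n).ae_nonneg_of_expMeasure.mono fun ω hω => mul_nonneg (pow_nonneg hq0.le n) hω
  have hsum : ∀ᵐ ω ∂μ, Summable fun n => q ^ n * ε n ω := by
    refine ae_summable_of_summable_integral
      (fun n => ((hε n).integrable_of_expMeasure one_pos).const_mul _) hnonneg ?_
    simp_rw [integral_const_mul, fun n => (hε n).integral_eq]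
    exact (summable_geometric_of_lt_one hq0.le hq1).mul_right _
  refine ⟨hsum, fun l hl => ?_⟩
  have hmgf : ∀ n, mgf (fun ω => q ^ n * ε n ω) μ l = (1 - l * q ^ n)⁻¹ := fun n => by
    rw [mgf_const_mul, (hε n).mgf_of_expMeasure one_pos
      (by simpa only [mul_comm] using mul_pow_lt_one hl hq0.le hq1.le n), one_div, mul_comm]
  have hindep' : iIndepFun (fun n ω => q ^ n * ε n ω) μ :=
    hindep.comp _ fun n => measurable_const_mul (q ^ n)
  refine hindep'.integral_exp_mul_tsum (fun n => (hmeas n).const_mul _) hnonneg hsum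
    (fun n => mgf_pos_iff.1 ?_) ?_
  · rw [hmgf]
    exact inv_pos.2 (sub_pos.2 (mul_pow_lt_one hl hq0.le hq1.le n))
  · simpa only [hmgf] using (multipliable_inv_one_sub_mul_pow hl hq0.le hq1).hasProd
end

section
/- Let 0 < q < 1 and let I = Σ_{n=0}^∞ q^n ε_n where (ε_n) are i.i.d. standard exponential random variables. Then for every nonnegative integer k, E[I^k] = k! / ((1−q)(1−q^2)⋯(1−q^k)) = k! / ∏_{j=1}^{k} (1 − q^j). -/
open MeasureTheory ProbabilityTheory Real Finset

namespace ExpMomAux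

noncomputable def G (q : ℝ) (N k : ℕ) : ℝ :=
  ∏ j ∈ Finset.range k, (1 - q ^ (N + j)) / (1 - q ^ (j + 1))

lemma one_sub_pow_pos {q : ℝ} (hq0 : 0 < q) (hq1 : q < 1) (m : ℕ) (hm : m ≠ 0) :
    0 < 1 - q ^ m := by
  have : q ^ m < 1 := pow_lt_one₀ hq0.le hq1 hm
  linarith

lemma G_zero_right (q : ℝ) (N : ℕ) : G q N 0 = 1 := by simp [G]

lemma G_succ_right (q : ℝ) (N k : ℕ) :
    G q N (k + 1) = G q N k * ((1 - q ^ (N + k)) / (1 - q ^ (k + 1))) := by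
  rw [G, Finset.prod_range_succ, ← G]

lemma G_zero_left (q : ℝ) {k : ℕ} (hk : k ≠ 0) : G q 0 k = 0 := by
  refine Finset.prod_eq_zero (Finset.mem_range.2 (Nat.pos_of_ne_zero hk)) ?_
  simp

lemma G_key {q : ℝ} (hq0 : 0 < q) (hq1 : q < 1) (N k : ℕ) :
    (1 - q ^ (k + 1)) * G q N (k + 1) = (1 - q ^ N) * G q (N + 1) k := by
  induction k with
  | zero =>
    have hne : (1 - q ^ (0 + 1)) ≠ 0 := (one_sub_pow_pos hq0 hq1 _ one_ne_zero).ne'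
    rw [G_succ_right, G_zero_right, G_zero_right, one_mul, mul_one,
      mul_div_cancel₀ _ hne, Nat.add_zero]
  | succ k ih =>
    have hne1 : (1 - q ^ (k + 1)) ≠ 0 := (one_sub_pow_pos hq0 hq1 _ k.succ_ne_zero).ne'
    have hne2 : (1 - q ^ (k + 1 + 1)) ≠ 0 := (one_sub_pow_pos hq0 hq1 _ (Nat.succ_ne_zero _)).ne'
    have e1 : (1 - q ^ (k + 1 + 1)) * G q N (k + 1 + 1)
        = G q N (k + 1) * (1 - q ^ (N + (k + 1))) := by
      rw [G_succ_right]; field_simp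
    have e2 : (1 - q ^ (k + 1)) * G q (N + 1) (k + 1)
        = G q (N + 1) k * (1 - q ^ ((N + 1) + k)) := by
      rw [G_succ_right]; field_simp
    refine mul_left_cancel₀ hne1 ?_
    linear_combination (1 - q ^ (k + 1)) * e1 + (1 - q ^ (N + (k + 1))) * ih
      - (1 - q ^ N) * e2

lemma G_pascal {q : ℝ} (hq0 : 0 < q) (hq1 : q < 1) (N k : ℕ) :
    G q (N + 1) (k + 1) = G q N (k + 1) + q ^ N * G q (N + 1) k := by
  have hne1 : (1 - q ^ (k + 1)) ≠ 0 := (one_sub_pow_pos hq0 hq1 _ k.succ_ne_zero).ne'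
  have e2 : (1 - q ^ (k + 1)) * G q (N + 1) (k + 1)
      = G q (N + 1) k * (1 - q ^ ((N + 1) + k)) := by
    rw [G_succ_right]; field_simp
  have key := G_key hq0 hq1 N k
  refine mul_left_cancel₀ hne1 ?_
  linear_combination e2 - key

lemma G_recursion {q : ℝ} (hq0 : 0 < q) (hq1 : q < 1) (N k : ℕ) :
    G q (N + 1) k = ∑ j ∈ Finset.range (k + 1), G q N j * q ^ (N * (k - j)) := by
  induction k with
  | zero => simp [G_zero_right]
  | succ k ih =>
    rw [Finset.sum_range_succ]
    have hlast : G q N (k + 1) * q ^ (N * (k + 1 - (k + 1))) = G q N (k + 1) := by simp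
    rw [hlast]
    have hstep : ∑ j ∈ Finset.range (k + 1), G q N j * q ^ (N * (k + 1 - j))
        = q ^ N * ∑ j ∈ Finset.range (k + 1), G q N j * q ^ (N * (k - j)) := by
      rw [Finset.mul_sum]
      refine Finset.sum_congr rfl fun j hj => ?_
      have hj' : j ≤ k := Nat.lt_succ_iff.mp (Finset.mem_range.mp hj)
      have h : k + 1 - j = (k - j) + 1 := by omega
      rw [h, Nat.mul_add, pow_add, mul_one]
      ring
    rw [hstep, ← ih, G_pascal hq0 hq1]
    ring

end ExpMomAux
namespace ExpMomAux

lemma exp_real_integral_pow (m : ℕ) :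
    ∫ x in Set.Ioi (0:ℝ), Real.exp (-x) * x ^ m = m.factorial := by
  have h := Real.Gamma_eq_integral (s := (m : ℝ) + 1) (by positivity)
  rw [Real.Gamma_nat_eq_factorial] at h
  rw [h]
  refine setIntegral_congr_fun measurableSet_Ioi fun x hx => ?_
  rw [add_sub_cancel_right, Real.rpow_natCast]

lemma exp_real_integrable_pow (m : ℕ) :
    IntegrableOn (fun x => Real.exp (-x) * x ^ m) (Set.Ioi (0:ℝ)) := by
  have h := Real.GammaIntegral_convergent (s := (m : ℝ) + 1) (by positivity)
  refine h.congr_fun (fun x hx => ?_) measurableSet_Ioi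
  rw [add_sub_cancel_right]; exact congrArg (Real.exp (-x) * ·) (Real.rpow_natCast x m)

lemma gammaPDF_11 {x : ℝ} (hx : 0 ≤ x) :
    gammaPDF 1 1 x = ENNReal.ofReal (Real.exp (-x)) := by
  rw [gammaPDF_of_nonneg hx]
  norm_num [Real.Gamma_one, Real.rpow_zero]

lemma expMeasure_Iio_zero : expMeasure 1 (Set.Iio (0:ℝ)) = 0 := by
  show gammaMeasure 1 1 (Set.Iio (0:ℝ)) = 0
  rw [gammaMeasure, withDensity_apply _ measurableSet_Iio]
  exact lintegral_gammaPDF_of_nonpos le_rfl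

lemma expMeasure_ae_nonneg : ∀ᵐ x ∂(expMeasure 1), (0:ℝ) ≤ x := by
  rw [ae_iff]
  have : {x : ℝ | ¬ (0:ℝ) ≤ x} = Set.Iio 0 := by ext x; simp
  rw [this]
  exact expMeasure_Iio_zero

lemma exp_lintegral_pow (m : ℕ) :
    ∫⁻ x, ENNReal.ofReal (x ^ m) ∂(expMeasure 1) = ENNReal.ofReal m.factorial := by
  have hmeasf : Measurable fun x : ℝ => ENNReal.ofReal (x ^ m) :=
    (measurable_id.pow_const m).ennreal_ofReal
  have hpdf : Measurable (gammaPDF 1 1) := (measurable_gammaPDFReal 1 1).ennreal_ofReal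
  rw [show expMeasure 1 = volume.withDensity (gammaPDF 1 1) from rfl,
    lintegral_withDensity_eq_lintegral_mul _ hpdf hmeasf]
  rw [← lintegral_add_compl (μ := volume) _ (measurableSet_Ici (a := (0:ℝ)))]
  have h2 : ∫⁻ x in (Set.Ici (0:ℝ))ᶜ,
      (gammaPDF 1 1 * fun x : ℝ => ENNReal.ofReal (x ^ m)) x = 0 := by
    rw [Set.compl_Ici]
    rw [setLIntegral_congr_fun (g := fun _ => (0:ENNReal)) measurableSet_Iio
      (fun x (hx : x < 0) => by
        simp [Pi.mul_apply, gammaPDF_of_neg hx]), lintegral_zero]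
  rw [h2, add_zero]
  have h1 : ∫⁻ x in Set.Ici (0:ℝ),
      (gammaPDF 1 1 * fun x : ℝ => ENNReal.ofReal (x ^ m)) x
      = ∫⁻ x in Set.Ici (0:ℝ), ENNReal.ofReal (Real.exp (-x) * x ^ m) := by
    refine setLIntegral_congr_fun measurableSet_Ici (fun x (hx : 0 ≤ x) => ?_)
    rw [Pi.mul_apply, gammaPDF_11 hx, ← ENNReal.ofReal_mul (Real.exp_nonneg _)]
  rw [h1, ← ofReal_integral_eq_lintegral_ofReal]
  · rw [integral_Ici_eq_integral_Ioi, exp_real_integral_pow]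
  · exact (integrableOn_Ici_iff_integrableOn_Ioi (by exact enorm_ne_top)).2 (exp_real_integrable_pow m)
  · refine (ae_restrict_iff' measurableSet_Ici).2 (ae_of_all _ fun x (hx : 0 ≤ x) => ?_)
    positivity

lemma exp_integrable_pow (m : ℕ) :
    Integrable (fun x : ℝ => x ^ m) (expMeasure 1) := by
  have hnn : 0 ≤ᵐ[expMeasure 1] fun x : ℝ => x ^ m :=
    expMeasure_ae_nonneg.mono fun x hx => by positivity
  refine ⟨(measurable_id.pow_const m).aestronglyMeasurable, ?_⟩
  rw [hasFiniteIntegral_iff_ofReal hnn, exp_lintegral_pow]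
  exact ENNReal.ofReal_lt_top

lemma exp_integral_pow (m : ℕ) :
    ∫ x, x ^ m ∂(expMeasure 1) = m.factorial := by
  have hnn : 0 ≤ᵐ[expMeasure 1] fun x : ℝ => x ^ m :=
    expMeasure_ae_nonneg.mono fun x hx => by positivity
  rw [integral_eq_lintegral_of_nonneg_ae hnn
    (measurable_id.pow_const m).aestronglyMeasurable, exp_lintegral_pow,
    ENNReal.toReal_ofReal (by positivity)]


lemma G_mono {q : ℝ} (hq0 : 0 < q) (hq1 : q < 1) (k : ℕ) :
    Monotone fun N => G q N k := by
  refine monotone_nat_of_le_succ fun N => ?_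
  refine Finset.prod_le_prod (fun j _ => ?_) (fun j _ => ?_)
  · have h1 : q ^ (N + j) ≤ 1 := pow_le_one₀ hq0.le hq1.le
    have h2 : 0 < 1 - q ^ (j + 1) := one_sub_pow_pos hq0 hq1 _ j.succ_ne_zero
    exact div_nonneg (by linarith) h2.le
  · have h2 : 0 < 1 - q ^ (j + 1) := one_sub_pow_pos hq0 hq1 _ j.succ_ne_zero
    have h3 : q ^ (N + 1 + j) ≤ q ^ (N + j) :=
      pow_le_pow_of_le_one hq0.le hq1.le (by omega)
    exact (div_le_div_iff_of_pos_right h2).mpr (by linarith)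

lemma G_tendsto {q : ℝ} (hq0 : 0 < q) (hq1 : q < 1) (k : ℕ) :
    Filter.Tendsto (fun N => G q N k) Filter.atTop
      (nhds (∏ j ∈ Finset.range k, 1 / (1 - q ^ (j + 1)))) := by
  have h : ∀ j ∈ Finset.range k, Filter.Tendsto
      (fun N : ℕ => (1 - q ^ (N + j)) / (1 - q ^ (j + 1))) Filter.atTop
      (nhds ((1 - 0) / (1 - q ^ (j + 1)))) := by
    intro j _
    refine Filter.Tendsto.div_const (tendsto_const_nhds.sub ?_) _
    have h0 : Filter.Tendsto (fun N : ℕ => q ^ N * q ^ j) Filter.atTop (nhds (0 * q ^ j)) :=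
      (tendsto_pow_atTop_nhds_zero_of_lt_one hq0.le hq1).mul_const _
    simpa [pow_add] using h0
  have := tendsto_finset_prod (Finset.range k) h
  simpa [G] using this

end ExpMomAux

open ExpMomAux in
/-- For `0 < q < 1` and `I = ∑ q^n ε_n` with `(ε n)` i.i.d. standard exponentials,
`E[I^k] = k! / ((1-q)(1-q²)⋯(1-q^k))`. -/
theorem exponential_functional_poisson_moments
    {Ω : Type*} [MeasurableSpace Ω] (μ : Measure Ω) [IsProbabilityMeasure μ]
    (ε : ℕ → Ω → ℝ) (hmeas : ∀ n, Measurable (ε n))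
    (hindep : iIndepFun ε μ)
    (hlaw : ∀ n, Measure.map (ε n) μ = expMeasure 1)
    (q : ℝ) (hq0 : 0 < q) (hq1 : q < 1) (k : ℕ) :
    ∫ ω, (∑' n, q ^ n * ε n ω) ^ k ∂μ
      = (k.factorial : ℝ) / ∏ j ∈ Finset.range k, (1 - q ^ (j + 1)) := by
  classical
  set g : ℕ → Ω → ℝ := fun n ω => q ^ n * ε n ω with hg_def
  set S : ℕ → Ω → ℝ := fun N ω => ∑ n ∈ Finset.range N, g n ω with hS_def
  have hSapp : ∀ N ω, S N ω = ∑ n ∈ Finset.range N, g n ω := fun N ω => by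
    simp only [hS_def]
  have hgmeas : ∀ n, Measurable (g n) := fun n => (hmeas n).const_mul _
  have hSmeas : ∀ N, Measurable (S N) := fun N => by
    simp only [hS_def]
    exact Finset.measurable_sum _ fun n _ => hgmeas n
  -- moments of the exponentials
  have hεint : ∀ n m, Integrable (fun ω => ε n ω ^ m) μ := by
    intro n m
    have h1 : AEStronglyMeasurable (fun x : ℝ => x ^ m) (Measure.map (ε n) μ) :=
      (measurable_id.pow_const m).aestronglyMeasurable
    refine (integrable_map_measure h1 (hmeas n).aemeasurable).1 ?_
    rw [hlaw n]; exact exp_integrable_pow m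
  have hεmom : ∀ n m, ∫ ω, ε n ω ^ m ∂μ = (m.factorial : ℝ) := by
    intro n m
    calc ∫ ω, ε n ω ^ m ∂μ
        = ∫ x, x ^ m ∂(Measure.map (ε n) μ) :=
          (integral_map (hmeas n).aemeasurable
            (measurable_id.pow_const m).aestronglyMeasurable).symm
      _ = (m.factorial : ℝ) := by rw [hlaw n]; exact exp_integral_pow m
  have hgpow : ∀ n m, (fun ω => g n ω ^ m) = fun ω => q ^ (n * m) * ε n ω ^ m := by
    intro n m
    funext ω
    simp only [hg_def, mul_pow, ← pow_mul]
  have hgint : ∀ n m, Integrable (fun ω => g n ω ^ m) μ := by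
    intro n m; rw [hgpow]; exact (hεint n m).const_mul _
  have hgmom : ∀ n m, ∫ ω, g n ω ^ m ∂μ = q ^ (n * m) * (m.factorial : ℝ) := by
    intro n m
    rw [hgpow, integral_const_mul, hεmom]
  -- independence
  have hgindep : iIndepFun g μ := by
    have h := hindep.comp (fun n (x : ℝ) => q ^ n * x)
      (fun n => measurable_id.const_mul _)
    exact h
  have hSg : ∀ N, IndepFun (S N) (g N) μ := by
    intro N
    have h1 : IndepFun (∑ j ∈ Finset.range N, g j) (g N) μ :=
      hgindep.indepFun_sum_range_succ hgmeas N
    have h2 : (∑ j ∈ Finset.range N, g j) = S N := by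
      funext ω; rw [Finset.sum_apply, hSapp]
    rwa [h2] at h1
  have hSgpow : ∀ N j m, IndepFun (fun ω => S N ω ^ j) (fun ω => g N ω ^ m) μ :=
    fun N j m => (hSg N).comp (measurable_id.pow_const j) (measurable_id.pow_const m)
  -- main finite-level computation
  have main : ∀ N k, Integrable (fun ω => S N ω ^ k) μ ∧
      ∫ ω, S N ω ^ k ∂μ = (k.factorial : ℝ) * G q N k := by
    intro N
    induction N with
    | zero =>
      intro k
      have hS0 : ∀ ω, S 0 ω = 0 := fun ω => by simp [hSapp]
      rcases Nat.eq_zero_or_pos k with rfl | hk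
      · constructor
        · simp only [pow_zero]; exact integrable_const 1
        · simp [G_zero_right, integral_const, measure_univ]
      · have h0 : (fun ω => S 0 ω ^ k) = fun _ => (0:ℝ) := by
          funext ω; rw [hS0 ω, zero_pow hk.ne']
        constructor
        · rw [h0]; exact integrable_const 0
        · rw [h0, G_zero_left q hk.ne']
          simp
    | succ N IH =>
      intro k
      have hsplit : ∀ ω, S (N+1) ω = S N ω + g N ω := fun ω => by
        rw [hSapp, hSapp, Finset.sum_range_succ]
      have hexp : (fun ω => S (N+1) ω ^ k)
          = fun ω => ∑ j ∈ Finset.range (k+1),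
              S N ω ^ j * g N ω ^ (k - j) * (k.choose j : ℝ) := by
        funext ω; rw [hsplit ω, add_pow]
      have hterm_int : ∀ j, Integrable (fun ω => S N ω ^ j * g N ω ^ (k - j)) μ := by
        intro j
        exact (hSgpow N j (k-j)).integrable_mul (IH j).1 (hgint N (k-j))
      have hterm_int' : ∀ j ∈ Finset.range (k+1), Integrable
          (fun ω => S N ω ^ j * g N ω ^ (k - j) * (k.choose j : ℝ)) μ :=
        fun j _ => (hterm_int j).mul_const _
      constructor
      · rw [hexp]; exact integrable_finset_sum _ hterm_int'
      · rw [hexp, integral_finset_sum _ hterm_int']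
        have hval : ∀ j ∈ Finset.range (k+1),
            ∫ ω, S N ω ^ j * g N ω ^ (k - j) * (k.choose j : ℝ) ∂μ
            = (k.factorial : ℝ) * (G q N j * q ^ (N * (k - j))) := by
          intro j hj
          have hj' : j ≤ k := Nat.lt_succ_iff.mp (Finset.mem_range.mp hj)
          rw [integral_mul_const]
          have hmul := (hSgpow N j (k-j)).integral_mul_eq_mul_integral
            (IH j).1.aestronglyMeasurable (hgint N (k-j)).aestronglyMeasurable
          rw [show (fun ω => S N ω ^ j) * (fun ω => g N ω ^ (k-j))
            = fun ω => S N ω ^ j * g N ω ^ (k-j) from rfl] at hmul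
          rw [hmul, (IH j).2, hgmom N (k-j)]
          have hfac : ((k.choose j : ℕ) : ℝ) * (j.factorial : ℝ) * ((k - j).factorial : ℝ)
              = (k.factorial : ℝ) := by
            exact_mod_cast congrArg (Nat.cast : ℕ → ℝ)
              (Nat.choose_mul_factorial_mul_factorial hj')
          linear_combination (G q N j * q ^ (N * (k - j))) * hfac
        rw [Finset.sum_congr rfl hval, ← Finset.mul_sum, ← G_recursion hq0 hq1]
  -- almost-everywhere facts
  have hε0 : ∀ n, ∀ᵐ ω ∂μ, 0 ≤ ε n ω := by
    intro n
    rw [ae_iff]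
    have h1 : {ω | ¬ (0:ℝ) ≤ ε n ω} = ε n ⁻¹' (Set.Iio 0) := by ext ω; simp
    rw [h1, ← Measure.map_apply (hmeas n) measurableSet_Iio, hlaw n]
    exact expMeasure_Iio_zero
  have hεae : ∀ᵐ ω ∂μ, ∀ n, 0 ≤ ε n ω := ae_all_iff.2 hε0
  have hεlint : ∀ n, ∫⁻ ω, ENNReal.ofReal (ε n ω) ∂μ = 1 := by
    intro n
    have h := lintegral_map (μ := μ) (f := fun x : ℝ => ENNReal.ofReal x)
      ENNReal.measurable_ofReal (hmeas n)
    rw [hlaw n] at h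
    rw [← h]
    have h1 := exp_lintegral_pow 1
    simpa using h1
  have hfin : ∫⁻ ω, ∑' n, ENNReal.ofReal (g n ω) ∂μ ≠ ⊤ := by
    rw [lintegral_tsum (fun n => ((hgmeas n).ennreal_ofReal).aemeasurable)]
    have heach : ∀ n, ∫⁻ ω, ENNReal.ofReal (g n ω) ∂μ = ENNReal.ofReal (q ^ n) := by
      intro n
      calc ∫⁻ ω, ENNReal.ofReal (g n ω) ∂μ
          = ∫⁻ ω, ENNReal.ofReal (q ^ n) * ENNReal.ofReal (ε n ω) ∂μ := by
            refine lintegral_congr fun ω => ?_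
            simp only [hg_def]
            rw [ENNReal.ofReal_mul (pow_nonneg hq0.le n)]
        _ = ENNReal.ofReal (q ^ n) * ∫⁻ ω, ENNReal.ofReal (ε n ω) ∂μ :=
            lintegral_const_mul _ ((hmeas n).ennreal_ofReal)
        _ = ENNReal.ofReal (q ^ n) := by rw [hεlint n, mul_one]
    rw [tsum_congr heach,
      ← ENNReal.ofReal_tsum_of_nonneg (fun n => pow_nonneg hq0.le n)
        (summable_geometric_of_lt_one hq0.le hq1)]
    exact ENNReal.ofReal_ne_top
  have hfin_ae : ∀ᵐ ω ∂μ, ∑' n, ENNReal.ofReal (g n ω) < ⊤ :=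
    ae_lt_top (Measurable.ennreal_tsum fun n => (hgmeas n).ennreal_ofReal) hfin
  have hgood : ∀ᵐ ω ∂μ, (∀ n, 0 ≤ ε n ω) ∧ Summable (fun n => g n ω) := by
    filter_upwards [hεae, hfin_ae] with ω h1 h2
    refine ⟨h1, ?_⟩
    have h3 := ENNReal.summable_toReal h2.ne
    refine h3.congr fun n => ?_
    rw [ENNReal.toReal_ofReal]
    simp only [hg_def]
    exact mul_nonneg (pow_nonneg hq0.le n) (h1 n)
  set F : Ω → ℝ := fun ω => (∑' n, q ^ n * ε n ω) ^ k with hF_def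
  have hFg : ∀ ω, F ω = (∑' n, g n ω) ^ k := fun ω => by simp only [hF_def, hg_def]
  have hgnn : ∀ᵐ ω ∂μ, ∀ N, (0:ℝ) ≤ S N ω := by
    filter_upwards [hεae] with ω h N
    rw [hSapp]
    exact Finset.sum_nonneg fun n _ => mul_nonneg (pow_nonneg hq0.le n) (h n)
  have hmono : ∀ᵐ ω ∂μ, Monotone fun N => ENNReal.ofReal (S N ω ^ k) := by
    filter_upwards [hεae, hgnn] with ω h1 h2
    intro a b hab
    refine ENNReal.ofReal_le_ofReal (pow_le_pow_left₀ (h2 a) ?_ k)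
    rw [hSapp, hSapp]
    exact Finset.sum_le_sum_of_subset_of_nonneg (Finset.range_subset_range.2 hab)
      fun n _ _ => mul_nonneg (pow_nonneg hq0.le n) (h1 n)
  have htend : ∀ᵐ ω ∂μ, Filter.Tendsto (fun N => S N ω ^ k) Filter.atTop (nhds (F ω)) := by
    filter_upwards [hgood] with ω h
    rw [hFg]
    have h4 := h.2.hasSum.tendsto_sum_nat
    have h5 : Filter.Tendsto (fun N => S N ω) Filter.atTop (nhds (∑' n, g n ω)) := by
      refine h4.congr fun N => ?_
      rw [hSapp]
    exact h5.pow k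
  have hFnn : 0 ≤ᵐ[μ] F := by
    filter_upwards [hgood] with ω h
    rw [hFg]
    exact pow_nonneg (tsum_nonneg fun n => mul_nonneg (pow_nonneg hq0.le n) (h.1 n)) k
  have hFaesm : AEStronglyMeasurable F μ :=
    (aemeasurable_of_tendsto_metrizable_ae Filter.atTop
      (fun N => ((hSmeas N).pow_const k).aemeasurable) htend).aestronglyMeasurable
  have hprodpos : 0 < ∏ j ∈ Finset.range k, (1 - q ^ (j + 1)) :=
    Finset.prod_pos fun j _ => one_sub_pow_pos hq0 hq1 _ j.succ_ne_zero
  have key : ∫⁻ ω, ENNReal.ofReal (F ω) ∂μ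
      = ENNReal.ofReal ((k.factorial : ℝ) / ∏ j ∈ Finset.range k, (1 - q ^ (j + 1))) := by
    have e1 : ∫⁻ ω, ENNReal.ofReal (F ω) ∂μ
        = ∫⁻ ω, ⨆ N, ENNReal.ofReal (S N ω ^ k) ∂μ := by
      refine lintegral_congr_ae ?_
      filter_upwards [hmono, htend] with ω h1 h2
      exact (iSup_eq_of_tendsto h1 ((ENNReal.continuous_ofReal.tendsto _).comp h2)).symm
    rw [e1, lintegral_iSup'
      (fun N => ((hSmeas N).pow_const k).ennreal_ofReal.aemeasurable) hmono]
    have e2 : ∀ N, ∫⁻ ω, ENNReal.ofReal (S N ω ^ k) ∂μ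
        = ENNReal.ofReal ((k.factorial : ℝ) * G q N k) := by
      intro N
      rw [← ofReal_integral_eq_lintegral_ofReal (main N k).1
        (hgnn.mono fun ω h => pow_nonneg (h N) k), (main N k).2]
    simp only [e2]
    have hGm : Monotone fun N => ENNReal.ofReal ((k.factorial : ℝ) * G q N k) := by
      intro a b hab
      exact ENNReal.ofReal_le_ofReal
        (mul_le_mul_of_nonneg_left (G_mono hq0 hq1 k hab) (Nat.cast_nonneg _))
    have hGt : Filter.Tendsto (fun N => (k.factorial : ℝ) * G q N k) Filter.atTop
        (nhds ((k.factorial : ℝ) / ∏ j ∈ Finset.range k, (1 - q ^ (j + 1)))) := by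
      have h3 := (G_tendsto hq0 hq1 k).const_mul (k.factorial : ℝ)
      have heq : (k.factorial : ℝ) * ∏ j ∈ Finset.range k, 1 / (1 - q ^ (j + 1))
          = (k.factorial : ℝ) / ∏ j ∈ Finset.range k, (1 - q ^ (j + 1)) := by
        rw [Finset.prod_div_distrib, Finset.prod_const_one, mul_one_div]
      rw [heq] at h3
      exact h3
    exact iSup_eq_of_tendsto hGm ((ENNReal.continuous_ofReal.tendsto _).comp hGt)
  calc ∫ ω, F ω ∂μ
      = (∫⁻ ω, ENNReal.ofReal (F ω) ∂μ).toReal :=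
        integral_eq_lintegral_of_nonneg_ae hFnn hFaesm
    _ = (k.factorial : ℝ) / ∏ j ∈ Finset.range k, (1 - q ^ (j + 1)) := by
        rw [key, ENNReal.toReal_ofReal (div_nonneg (Nat.cast_nonneg _) hprodpos.le)]
end

section
/- Let μ ∈ ℝ and ν > 0, and define f(x) = c · exp(−2μ arctan x) / (1+x^2)^{ν+1/2} on ℝ, where c is the normalizing constant. Let M be the differential operator (M g)(x) = ((1+x^2)/2) g''(x) − (μ + (ν − 1/2)x) g'(x). Then f is annihilated by the formal adjoint of M: for every smooth compactly supported test function g, ∫_ℝ (M g)(x) f(x) dx = 0. -/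
open MeasureTheory Real

/-- The Pearson type IV density `f(x) = c exp(-2μ arctan x)/(1+x²)^{ν+1/2}` is
annihilated by the formal adjoint of the diffusion generator
`M g = ((1+x²)/2) g'' - (μ + (ν-1/2)x) g'`: for every smooth compactly supported
test function `g`, `∫ (M g) f = 0`. -/
theorem pearson_density_invariant (μ ν : ℝ) (hν : 0 < ν) (c : ℝ) (hc : 0 < c)
    (f : ℝ → ℝ)
    (hf : ∀ x : ℝ, f x = c * Real.exp (-2 * μ * Real.arctan x) /
      (1 + x ^ 2) ^ (ν + 1 / 2))
    (g : ℝ → ℝ) (hg : ContDiff ℝ (⊤ : ℕ∞) g) (hsupp : HasCompactSupport g) :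
    ∫ x : ℝ, ((1 + x ^ 2) / 2 * deriv (deriv g) x
        - (μ + (ν - 1 / 2) * x) * deriv g x) * f x = 0 := by
  have hpos : ∀ x : ℝ, (0:ℝ) < 1 + x ^ 2 := fun x => by positivity
  -- rewrite f as exp of a smooth function
  set φ : ℝ → ℝ := fun x => -2 * μ * Real.arctan x - (ν + 1/2) * Real.log (1 + x ^ 2)
    with hφ
  have hf' : ∀ x : ℝ, f x = c * Real.exp (φ x) := by
    intro x
    rw [hf x, Real.rpow_def_of_pos (hpos x), hφ,
      mul_comm (Real.log (1 + x ^ 2)) (ν + 1/2), Real.exp_sub]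
    ring
  -- derivative of φ
  have hφd : ∀ x : ℝ, HasDerivAt φ
      (-2 * μ * (1 / (1 + x ^ 2)) - (ν + 1/2) * (2 * x / (1 + x ^ 2))) x := by
    intro x
    have h1 : HasDerivAt (fun x : ℝ => Real.arctan x) (1 / (1 + x ^ 2)) x :=
      Real.hasDerivAt_arctan x
    have h2 : HasDerivAt (fun x : ℝ => (1 : ℝ) + x ^ 2) (2 * x) x := by
      simpa using ((hasDerivAt_pow 2 x).const_add (1 : ℝ))
    have h3 : HasDerivAt (fun x : ℝ => Real.log (1 + x ^ 2)) (2 * x / (1 + x ^ 2)) x :=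
      h2.log (hpos x).ne'
    exact ((h1.const_mul (-2 * μ)).sub (h3.const_mul (ν + 1/2)))
  have hfd : ∀ x : ℝ, HasDerivAt f
      (f x * (-2 * μ * (1 / (1 + x ^ 2)) - (ν + 1/2) * (2 * x / (1 + x ^ 2)))) x := by
    intro x
    have := ((hφd x).exp.const_mul c)
    have heq : (fun x => c * Real.exp (φ x)) = f := by
      funext y; rw [hf' y]
    rw [heq] at this
    simpa [hf' x, mul_assoc, mul_comm, mul_left_comm] using this
  -- the antiderivative
  set F : ℝ → ℝ := fun x => (1 + x ^ 2) / 2 * deriv g x * f x with hF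
  have hg2 : ContDiff ℝ ((⊤ : ℕ∞) : WithTop ℕ∞) g := hg.of_le (by simp)
  have hg' : ContDiff ℝ ((⊤ : ℕ∞) : WithTop ℕ∞) (deriv g) := (contDiff_infty_iff_deriv.mp hg2).2
  have hgd : ∀ x : ℝ, HasDerivAt (deriv g) (deriv (deriv g) x) x := fun x =>
    ((hg'.differentiable (by simp)) x).hasDerivAt
  have hFd : ∀ x : ℝ, HasDerivAt F
      ((1 + x ^ 2) / 2 * deriv (deriv g) x * f x
        - (μ + (ν - 1 / 2) * x) * deriv g x * f x) x := by
    intro x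
    have h2 : HasDerivAt (fun x : ℝ => (1 + x ^ 2) / 2) x x := by
      simpa using (((hasDerivAt_pow 2 x).const_add (1 : ℝ)).div_const 2)
    have := (h2.mul (hgd x)).mul (hfd x)
    refine this.congr_deriv ?_
    have hne := (hpos x).ne'
    simp only [Pi.mul_apply]
    linear_combination (-(deriv g x * f x * (μ + (ν + 1 / 2) * x))) * mul_inv_cancel₀ hne
  have hderivF : ∀ x : ℝ, deriv F x = (1 + x ^ 2) / 2 * deriv (deriv g) x * f x
        - (μ + (ν - 1 / 2) * x) * deriv g x * f x := fun x => (hFd x).deriv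
  -- smoothness of f and F
  have hfc : ContDiff ℝ ((⊤ : ℕ∞) : WithTop ℕ∞) f := by
    have : ContDiff ℝ ((⊤ : ℕ∞) : WithTop ℕ∞) φ := by
      apply ContDiff.sub
      · exact contDiff_const.mul Real.contDiff_arctan
      · exact contDiff_const.mul (ContDiff.log
          (contDiff_const.add (contDiff_id.pow 2)) (fun x => (hpos x).ne'))
    have : ContDiff ℝ ((⊤ : ℕ∞) : WithTop ℕ∞) fun x => c * Real.exp (φ x) :=
      contDiff_const.mul (Real.contDiff_exp.comp this)
    convert this using 1
    funext x; rw [hf' x]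
  have hFc : ContDiff ℝ 1 F := by
    have : ContDiff ℝ ((⊤ : ℕ∞) : WithTop ℕ∞) F := by
      apply ContDiff.mul _ hfc
      apply ContDiff.mul _ hg'
      exact (contDiff_const.add (contDiff_id.pow 2)).div_const 2
    exact this.of_le (by exact_mod_cast le_top)
  have hFsupp : HasCompactSupport F := by
    have h1 : HasCompactSupport (deriv g) := hsupp.deriv
    have h2 : HasCompactSupport ((fun x : ℝ => (1 + x ^ 2) / 2) * deriv g) := h1.mul_left
    have h3 : HasCompactSupport (((fun x : ℝ => (1 + x ^ 2) / 2) * deriv g) * f) :=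
      h2.mul_right
    exact h3
  -- integrability
  have hint : Integrable (deriv F) := by
    exact (hFc.continuous_deriv le_rfl).integrable_of_hasCompactSupport hFsupp.deriv
  have key : ∫ x : ℝ, deriv F x = 0 := by
    have := intervalIntegral.integral_Iic_add_Ioi (b := (0:ℝ)) (f := deriv F)
      hint.integrableOn hint.integrableOn
    rw [← this, hFsupp.integral_Iic_deriv_eq hFc 0, hFsupp.integral_Ioi_deriv_eq hFc 0]
    ring
  calc ∫ x : ℝ, ((1 + x ^ 2) / 2 * deriv (deriv g) x
        - (μ + (ν - 1 / 2) * x) * deriv g x) * f x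
      = ∫ x : ℝ, deriv F x := by
        congr 1; funext x; rw [hderivF x]; ring
    _ = 0 := key
end

section
/- Let (a_n)_{n≥0} be defined by a_n = (−1)^n q^{n(n−1)/2} / ((q;q)_∞ (q;q)_n) for 0 < q < 1, where (q;q)_n = ∏_{j=1}^n (1−q^j). Then for every s > −1, ∫_0^∞ x^s Σ_{n=0}^∞ exp(−x/q^n) a_n dx = Γ(1+s) · (q^{1+s}; q)_∞ / (q;q)_∞, where the sum converges absolutely and may be integrated term by term. -/
/-!
Integrating term by term, `∫₀^∞ x^s e^{-x/qⁿ} dx = Γ(1+s) (q^{1+s})ⁿ`, so the Mellin transform is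
`Γ(1+s) / (q;q)_∞` times Euler's series `E(z) = ∑ (-1)ⁿ q^{n(n-1)/2} zⁿ / (q;q)ₙ` at `z = q^{1+s}`;
absolute convergence of the resulting series justifies the interchange. By the ratio test `E`
converges absolutely on `|z| ≤ 1`, where it is continuous with `E(0) = 1`, and the recursion of its
coefficients gives `E(z) = (1 - z) E(qz)`. Iterating and letting `qᴺz → 0` yields Euler's identity
`E(z) = (z;q)_∞`.
-/

open MeasureTheory Real Finset Filter Topology

noncomputable def eulerCoeff (q : ℝ) (n : ℕ) : ℝ :=
  (-1) ^ n * q ^ (n * (n - 1) / 2) / ∏ j ∈ range n, (1 - q ^ (j + 1))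

noncomputable def eulerSeries (q z : ℝ) : ℝ := ∑' n, eulerCoeff q n * z ^ n

lemma eulerCoeff_zero (q : ℝ) : eulerCoeff q 0 = 1 := by simp [eulerCoeff]

lemma eulerCoeff_succ (q : ℝ) (n : ℕ) :
    eulerCoeff q (n + 1) = -(q ^ n / (1 - q ^ (n + 1))) * eulerCoeff q n := by
  rw [eulerCoeff, eulerCoeff, Nat.triangle_succ, prod_range_succ, pow_add, pow_succ,
    div_mul_eq_div_div]
  ring

lemma one_sub_pow_succ_pos {q : ℝ} (hq0 : 0 ≤ q) (hq1 : q < 1) (n : ℕ) : 0 < 1 - q ^ (n + 1) :=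
  sub_pos.2 (pow_lt_one₀ hq0 hq1 n.succ_ne_zero)

lemma abs_mul_pow_le_abs (c : ℝ) {z : ℝ} (hz : |z| ≤ 1) (n : ℕ) : |c * z ^ n| ≤ |c| := by
  rw [abs_mul, abs_pow]
  exact mul_le_of_le_one_right (abs_nonneg c) (pow_le_one₀ (abs_nonneg z) hz)

lemma abs_mul_pow_le_one {q z : ℝ} (hq0 : 0 ≤ q) (hq1 : q ≤ 1) (hz : |z| ≤ 1) (n : ℕ) :
    |z * q ^ n| ≤ 1 := by
  rw [abs_mul, abs_of_nonneg (pow_nonneg hq0 n)]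
  exact mul_le_one₀ hz (by positivity) (pow_le_one₀ hq0 hq1)

lemma eulerCoeff_ne_zero {q : ℝ} (hq0 : 0 < q) (hq1 : q < 1) (n : ℕ) : eulerCoeff q n ≠ 0 := by
  simp [eulerCoeff, hq0.ne', prod_ne_zero_iff, (one_sub_pow_succ_pos hq0.le hq1 _).ne']

lemma summable_eulerCoeff {q : ℝ} (hq0 : 0 < q) (hq1 : q < 1) : Summable (eulerCoeff q) := by
  refine summable_of_ratio_test_tendsto_lt_one zero_lt_one
    (.of_forall (eulerCoeff_ne_zero hq0 hq1)) ?_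
  have hratio : ∀ n : ℕ, ‖eulerCoeff q (n + 1)‖ / ‖eulerCoeff q n‖ = q ^ n / (1 - q * q ^ n) := by
    intro n
    rw [eulerCoeff_succ, norm_mul, mul_div_assoc, div_self (norm_ne_zero_iff.2
      (eulerCoeff_ne_zero hq0 hq1 n)), mul_one, norm_neg, Real.norm_of_nonneg
      (div_nonneg (pow_nonneg hq0.le n) (one_sub_pow_succ_pos hq0.le hq1 n).le), pow_succ']
  simp_rw [hratio]
  have hpow := tendsto_pow_atTop_nhds_zero_of_lt_one hq0.le hq1
  have hlim := hpow.div ((hpow.const_mul q).const_sub 1) (by simp : (1 : ℝ) - q * 0 ≠ 0)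
  rwa [mul_zero, sub_zero, zero_div] at hlim

lemma summable_eulerCoeff_mul_pow {q z : ℝ} (hq0 : 0 < q) (hq1 : q < 1) (hz : |z| ≤ 1) :
    Summable fun n => eulerCoeff q n * z ^ n :=
  (summable_eulerCoeff hq0 hq1).abs.of_norm_bounded fun n => abs_mul_pow_le_abs _ hz n

lemma eulerSeries_eq_one_sub_mul {q z : ℝ} (hq0 : 0 < q) (hq1 : q < 1) (hz : |z| ≤ 1) :
    eulerSeries q z = (1 - z) * eulerSeries q (z * q) := by
  set g : ℕ → ℝ := fun n => eulerCoeff q n * (z * q) ^ n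
  have hzq : |z * q| ≤ 1 := by simpa using abs_mul_pow_le_one hq0.le hq1.le hz 1
  have hg : HasSum g (eulerSeries q (z * q)) := (summable_eulerCoeff_mul_pow hq0 hq1 hzq).hasSum
  have hshift : ∀ n : ℕ, eulerCoeff q (n + 1) * z ^ (n + 1) = g (n + 1) - z * g n := by
    intro n
    have hfac := (one_sub_pow_succ_pos hq0.le hq1 n).ne'
    simp only [g, eulerCoeff_succ]
    field_simp
    ring
  refine ((hasSum_nat_add_iff' 1).1 ?_).tsum_eq
  convert ((hasSum_nat_add_iff' 1).2 hg).sub (hg.mul_left z) using 1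
  · exact funext hshift
  · simp [g, eulerCoeff_zero]
    ring

lemma eulerSeries_eq_prod_mul {q z : ℝ} (hq0 : 0 < q) (hq1 : q < 1) (hz : |z| ≤ 1) (N : ℕ) :
    eulerSeries q z = (∏ j ∈ range N, (1 - z * q ^ j)) * eulerSeries q (z * q ^ N) := by
  induction N with
  | zero => simp
  | succ N ih =>
    rw [ih, eulerSeries_eq_one_sub_mul hq0 hq1 (abs_mul_pow_le_one hq0.le hq1.le hz N),
      prod_range_succ, pow_succ, mul_assoc, ← mul_assoc (∏ j ∈ range N, _)]

lemma eulerSeries_zero (q : ℝ) : eulerSeries q 0 = 1 := by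
  rw [eulerSeries, tsum_eq_single 0 fun n hn => by simp [hn]]
  simp [eulerCoeff_zero]

lemma continuousOn_eulerSeries {q : ℝ} (hq0 : 0 < q) (hq1 : q < 1) :
    ContinuousOn (eulerSeries q) (Metric.closedBall 0 1) :=
  continuousOn_tsum (fun n => (continuous_const.mul (continuous_pow n)).continuousOn)
    (summable_eulerCoeff hq0 hq1).abs fun n z hz =>
      abs_mul_pow_le_abs _ (by simpa using hz) n

lemma tendsto_eulerSeries_mul_pow {q z : ℝ} (hq0 : 0 < q) (hq1 : q < 1) (hz : |z| ≤ 1) :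
    Tendsto (fun N => eulerSeries q (z * q ^ N)) atTop (𝓝 1) := by
  have hzero : Tendsto (fun N => z * q ^ N) atTop (𝓝[Metric.closedBall 0 1] 0) := by
    refine tendsto_nhdsWithin_iff.2 ⟨?_, .of_forall fun N => ?_⟩
    · simpa using (tendsto_pow_atTop_nhds_zero_of_lt_one hq0.le hq1).const_mul z
    simpa using abs_mul_pow_le_one hq0.le hq1.le hz N
  rw [← eulerSeries_zero q]
  exact ((continuousOn_eulerSeries hq0 hq1) 0 (by simp)).tendsto.comp hzero

lemma multipliable_one_sub_mul_pow {q : ℝ} (hq0 : 0 < q) (hq1 : q < 1) (z : ℝ) :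
    Multipliable fun j : ℕ => 1 - z * q ^ j := by
  simp_rw [sub_eq_add_neg]
  refine multipliable_one_add_of_summable ?_
  simpa [abs_mul, abs_of_pos hq0] using
    (summable_geometric_of_lt_one hq0.le hq1).mul_left |z|

theorem eulerSeries_eq_tprod {q z : ℝ} (hq0 : 0 < q) (hq1 : q < 1) (hz : |z| ≤ 1) :
    eulerSeries q z = ∏' j : ℕ, (1 - z * q ^ j) := by
  have hlim := (multipliable_one_sub_mul_pow hq0 hq1 z).hasProd.tendsto_prod_nat.mul
    (tendsto_eulerSeries_mul_pow hq0 hq1 hz)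
  rw [mul_one] at hlim
  refine tendsto_nhds_unique ?_ hlim
  simp_rw [← eulerSeries_eq_prod_mul hq0 hq1 hz]
  exact tendsto_const_nhds

lemma integrableOn_rpow_mul_exp_neg_div {s c : ℝ} (hs : -1 < s) (hc : 0 < c) :
    IntegrableOn (fun x : ℝ => x ^ s * exp (-x / c)) (Set.Ioi 0) := by
  refine (integrableOn_rpow_mul_exp_neg_mul_rpow hs zero_lt_one (inv_pos.2 hc)).congr_fun
    (fun x _ => ?_) measurableSet_Ioi
  simp only [Real.rpow_one, neg_mul, div_eq_inv_mul, mul_neg]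

lemma integral_rpow_mul_exp_neg_div {s c : ℝ} (hs : -1 < s) (hc : 0 < c) :
    ∫ x in Set.Ioi (0 : ℝ), x ^ s * exp (-x / c) = Gamma (1 + s) * c ^ (1 + s) := by
  have h := integral_rpow_mul_exp_neg_mul_Ioi (a := 1 + s) (by linarith) (inv_pos.2 hc)
  rw [one_div, inv_inv, add_sub_cancel_left, mul_comm] at h
  rw [← h]
  simp only [div_eq_inv_mul, mul_neg]

theorem integral_rpow_mul_tsum_exp_neg_div_pow_mul {q s : ℝ} (hq : 0 < q) (hs : -1 < s)
    {b : ℕ → ℝ} (hb : Summable fun n => |b n| * (q ^ (1 + s)) ^ n) :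
    ∫ x in Set.Ioi (0 : ℝ), x ^ s * ∑' n : ℕ, exp (-x / q ^ n) * b n
      = Gamma (1 + s) * ∑' n : ℕ, b n * (q ^ (1 + s)) ^ n := by
  set F : ℕ → ℝ → ℝ := fun n x => x ^ s * exp (-x / q ^ n) * b n
  have hF_int : ∀ n, Integrable (F n) (volume.restrict (Set.Ioi 0)) := fun n =>
    (integrableOn_rpow_mul_exp_neg_div hs (pow_pos hq n)).mul_const (b n)
  have hF : ∀ (n : ℕ) (c : ℝ), ∫ x in Set.Ioi (0 : ℝ), x ^ s * exp (-x / q ^ n) * c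
      = Gamma (1 + s) * (c * (q ^ (1 + s)) ^ n) := by
    intro n c
    rw [integral_mul_const, integral_rpow_mul_exp_neg_div hs (pow_pos hq n),
      ← Real.rpow_pow_comm hq.le]
    ring
  have hF_norm : ∀ n, ∫ x in Set.Ioi (0 : ℝ), ‖F n x‖
      = Gamma (1 + s) * (|b n| * (q ^ (1 + s)) ^ n) := fun n => by
    rw [← hF, setIntegral_congr_fun measurableSet_Ioi fun x (hx : 0 < x) => ?_]
    simp [F, abs_of_pos (rpow_pos_of_pos hx s)]
  calc ∫ x in Set.Ioi (0 : ℝ), x ^ s * ∑' n : ℕ, exp (-x / q ^ n) * b n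
      = ∫ x in Set.Ioi (0 : ℝ), ∑' n : ℕ, F n x := by simp_rw [F, mul_assoc, tsum_mul_left]
    _ = ∑' n : ℕ, ∫ x in Set.Ioi (0 : ℝ), F n x := (integral_tsum_of_summable_integral_norm
        hF_int (by simpa only [hF_norm] using hb.mul_left (Gamma (1 + s)))).symm
    _ = Gamma (1 + s) * ∑' n : ℕ, b n * (q ^ (1 + s)) ^ n := by simp_rw [F, hF, tsum_mul_left]

/-- The Mellin transform of the density of the Poissonian exponential functional:
with `a_n = (-1)^n q^{n(n-1)/2} / ((q;q)_∞ (q;q)_n)`, for every `s > -1`,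
`∫_0^∞ x^s ∑_n exp(-x/q^n) a_n dx = Γ(1+s) (q^{1+s};q)_∞ / (q;q)_∞`,
the series being summable for each `x > 0`. -/
theorem poissonian_exponential_functional_mellin (q : ℝ) (hq0 : 0 < q) (hq1 : q < 1)
    (a : ℕ → ℝ)
    (ha : ∀ n : ℕ, a n = (-1) ^ n * q ^ (n * (n - 1) / 2) /
      ((∏' j : ℕ, (1 - q ^ (j + 1))) * ∏ j ∈ Finset.range n, (1 - q ^ (j + 1))))
    (s : ℝ) (hs : -1 < s) :
    (∀ x : ℝ, 0 < x → Summable (fun n : ℕ => Real.exp (-x / q ^ n) * a n)) ∧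
    ∫ x in Set.Ioi (0 : ℝ), x ^ s * ∑' n : ℕ, Real.exp (-x / q ^ n) * a n
      = Real.Gamma (1 + s) * (∏' j : ℕ, (1 - q ^ (1 + s) * q ^ (j : ℕ))) /
          ∏' j : ℕ, (1 - q ^ (j + 1)) := by
  set P := ∏' j : ℕ, (1 - q ^ (j + 1))
  set z := q ^ (1 + s)
  have hz0 : 0 < z := rpow_pos_of_pos hq0 _
  have hz1 : z ≤ 1 := rpow_le_one hq0.le hq1.le (by linarith)
  have ha' : a = fun n => eulerCoeff q n / P := funext fun n => by
    rw [ha, eulerCoeff, div_mul_eq_div_div_swap]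
  have ha_abs : Summable fun n => |a n| := by
    rw [ha']; exact ((summable_eulerCoeff hq0 hq1).div_const P).abs
  refine ⟨fun x hx => ha_abs.of_norm_bounded fun n => ?_, ?_⟩
  · rw [norm_mul, Real.norm_of_nonneg (exp_pos _).le, Real.norm_eq_abs]
    refine mul_le_of_le_one_left (abs_nonneg _) (exp_le_one_iff.2 ?_)
    exact div_nonpos_of_nonpos_of_nonneg (neg_nonpos.2 hx.le) (pow_pos hq0 n).le
  have hb : Summable fun n => |a n| * z ^ n := ha_abs.of_nonneg_of_le (fun n => by positivity)
    fun n => mul_le_of_le_one_right (abs_nonneg _) (pow_le_one₀ hz0.le hz1)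
  rw [integral_rpow_mul_tsum_exp_neg_div_pow_mul hq0 hs hb, ha', mul_div_assoc]
  simp_rw [div_mul_eq_mul_div, tsum_div_const]
  rw [← eulerSeries, eulerSeries_eq_tprod hq0 hq1 (by rwa [abs_of_pos hz0])]
end
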